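/- Let H be a Hermitian N×N complex matrix and K a unitary N×N complex matrix. Then the target function of the gradient flow satisfies the bound f(K) := Re (trace (K * H * Kᴴ * (-H))) ≤ Re (trace (H * H)), i.e. -Re (trace (K * H * Kᴴ * H)) ≤ trace(H²), and equality holds if and only if K * H * Kᴴ = -H. Hence the global maximum ‖H‖₂² of f over the unitary group is attained exactly at those K that sign-invert H by conjugation. -/

import Mathlib

/-!
Put `A = K H Kᴴ`: it is Hermitian and, as `K` is an isometry, `tr A² = tr H²`. Expanding the
squared Frobenius norm of `A + H` then gives `‖A + H‖₂² = 2 (tr H² - Re tr (A (-H)))`, which is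
nonnegative and vanishes exactly when `A = -H`.
-/

open Matrix
open scoped ComplexOrder

namespace Matrix

variable {𝕜 : Type*} [RCLike 𝕜] {m n : Type*} [Fintype m] [Fintype n]

theorem re_trace_conjTranspose_mul_self_nonneg (M : Matrix m n 𝕜) :
    0 ≤ RCLike.re (Mᴴ * M).trace :=
  (RCLike.nonneg_iff.mp (posSemidef_conjTranspose_mul_self M).trace_nonneg).1

theorem re_trace_conjTranspose_mul_self_eq_zero_iff (M : Matrix m n 𝕜) :
    RCLike.re (Mᴴ * M).trace = 0 ↔ M = 0 := by
  have him : RCLike.im (Mᴴ * M).trace = 0 :=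
    (RCLike.nonneg_iff.mp (posSemidef_conjTranspose_mul_self M).trace_nonneg).2
  rw [← trace_conjTranspose_mul_self_eq_zero_iff, RCLike.ext_iff (K := 𝕜)]
  simp [him]

theorem trace_mul_mul_conjTranspose_of_conjTranspose_mul_self [DecidableEq m] {K : Matrix n m 𝕜}
    (hK : Kᴴ * K = 1) (M : Matrix m m 𝕜) : (K * M * Kᴴ).trace = M.trace := by
  rw [trace_mul_cycle, hK, Matrix.one_mul]

theorem trace_conj_mul_self_of_conjTranspose_mul_self [DecidableEq m] {K : Matrix n m 𝕜}
    (hK : Kᴴ * K = 1) (M : Matrix m m 𝕜) :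
    (K * M * Kᴴ * (K * M * Kᴴ)).trace = (M * M).trace := by
  have : K * M * Kᴴ * (K * M * Kᴴ) = K * (M * M) * Kᴴ := by
    simp only [Matrix.mul_assoc, ← Matrix.mul_assoc Kᴴ K, hK, Matrix.one_mul]
  rw [this, trace_mul_mul_conjTranspose_of_conjTranspose_mul_self hK]

theorem IsHermitian.trace_conjTranspose_mul_self_add {A B : Matrix n n 𝕜}
    (hA : A.IsHermitian) (hB : B.IsHermitian) :
    ((A + B)ᴴ * (A + B)).trace = (A * A).trace + 2 * (A * B).trace + (B * B).trace := by
  rw [(hA.add hB).eq, add_mul, mul_add, mul_add, trace_add, trace_add, trace_add,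
    trace_mul_comm B A]
  ring

theorem IsHermitian.re_trace_mul_neg_le {A B : Matrix n n 𝕜} (hA : A.IsHermitian)
    (hB : B.IsHermitian) (hAB : (A * A).trace = (B * B).trace) :
    RCLike.re (A * -B).trace ≤ RCLike.re (B * B).trace ∧
      (RCLike.re (A * -B).trace = RCLike.re (B * B).trace ↔ A = -B) := by
  have hsq : RCLike.re ((A + B)ᴴ * (A + B)).trace =
      2 * (RCLike.re (B * B).trace - RCLike.re (A * -B).trace) := by
    rw [hA.trace_conjTranspose_mul_self_add hB, hAB, Matrix.mul_neg, trace_neg]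
    simp only [map_add, map_neg, RCLike.ofNat_mul_re]
    ring
  have hnonneg := re_trace_conjTranspose_mul_self_nonneg (A + B)
  refine ⟨by linarith, ?_⟩
  rw [← add_eq_zero_iff_eq_neg, ← re_trace_conjTranspose_mul_self_eq_zero_iff, hsq]
  constructor <;> intro h <;> linarith

end Matrix

theorem stmt18 (N : ℕ) (H K : Matrix (Fin N) (Fin N) ℂ)
    (hH : Hᴴ = H) (hK : Kᴴ * K = 1) :
    ((K * H * Kᴴ * (-H)).trace.re ≤ ((H * H).trace).re) ∧
    (((K * H * Kᴴ * (-H)).trace.re = ((H * H).trace).re) ↔ K * H * Kᴴ = -H) :=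
  (isHermitian_mul_mul_conjTranspose K hH).re_trace_mul_neg_le hH
    (trace_conj_mul_self_of_conjTranspose_mul_self hK H)
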